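/- arXiv:1908.09161 — 5 statements merged into one kernel-verified Lean document; each statement's English description precedes it below -/
import Mathlib

section
/- Let ξ : ℤ≥0 → ℂ be a Wiener sequence with correlations ρ(k) = lim_{n→∞} (1/n) ∑_{0 ≤ s < n} ξ(s) conj(ξ(s+k)), extended by ρ(-k) = conj(ρ(k)). Then ρ is positive semi-definite: for all m ≥ 0 and all complex numbers c_0, …, c_m, the sum ∑_{0 ≤ j,k ≤ m} c_j · conj(c_k) · ρ(k−j) is a nonnegative real number. -/
/-!
Writing `ρ (k - j)` as the limit of the shifted averages `n⁻¹ ∑_{s<n} ξ(s+j) conj ξ(s+k)`,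
the quadratic form `∑ c_j conj c_k ρ(k-j)` is the limit of
`n⁻¹ ∑_{s<n} |∑_j c_j ξ(s+j)|²`, a nonnegative real number for every `n`; the nonnegative reals
are closed in `ℂ`. Shifting the start of a Cesàro average does not change its limit, since
`n⁻¹ ∑_{s<n} f(s+j) = ((n+j)/n) (n+j)⁻¹ ∑_{s<n+j} f s - n⁻¹ ∑_{s<j} f s`.
-/

open Filter Finset ComplexConjugate Topology
open scoped ComplexOrder

theorem Filter.Tendsto.inv_smul_sum_range_add {𝕜 E : Type*} [RCLike 𝕜] [NormedAddCommGroup E]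
    [NormedSpace 𝕜 E] {f : ℕ → E} {L : E}
    (h : Tendsto (fun n : ℕ => (n : 𝕜)⁻¹ • ∑ s ∈ range n, f s) atTop (𝓝 L)) (j : ℕ) :
    Tendsto (fun n : ℕ => (n : 𝕜)⁻¹ • ∑ s ∈ range n, f (s + j)) atTop (𝓝 L) := by
  have hinv : Tendsto (fun n : ℕ => (n : 𝕜)⁻¹) atTop (𝓝 0) := tendsto_inv_atTop_nhds_zero_nat
  have hratio : Tendsto (fun n : ℕ => 1 + (j : 𝕜) * (n : 𝕜)⁻¹) atTop (𝓝 1) := by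
    simpa using tendsto_const_nhds.add (hinv.const_mul (j : 𝕜))
  have hshift := h.comp (tendsto_add_atTop_nat j)
  have hlim := (hratio.smul hshift).sub (hinv.smul_const (∑ s ∈ range j, f s))
  rw [one_smul, zero_smul, sub_zero] at hlim
  refine hlim.congr' ?_
  filter_upwards [eventually_ne_atTop 0] with n hn
  have hn' : (n : 𝕜) ≠ 0 := Nat.cast_ne_zero.mpr hn
  have hsum : ∑ s ∈ range n, f (s + j) = ∑ s ∈ range (n + j), f s - ∑ s ∈ range j, f s := by
    rw [add_comm n j, sum_range_add_sub_sum_range]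
    simp only [add_comm]
  have hcoef : (1 + (j : 𝕜) * (n : 𝕜)⁻¹) * ((n + j : ℕ) : 𝕜)⁻¹ = (n : 𝕜)⁻¹ := by
    push_cast
    field_simp
  simp only [Function.comp_apply, smul_smul, hcoef, hsum, smul_sub]

noncomputable def empiricalCorrelation (ξ : ℕ → ℂ) (j k n : ℕ) : ℂ :=
  (n : ℂ)⁻¹ * ∑ s ∈ range n, ξ (s + j) * conj (ξ (s + k))

lemma conj_empiricalCorrelation (ξ : ℕ → ℂ) (j k n : ℕ) :
    conj (empiricalCorrelation ξ j k n) = empiricalCorrelation ξ k j n := by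
  simp [empiricalCorrelation, map_sum, mul_comm]

lemma sum_sum_mul_empiricalCorrelation (ξ : ℕ → ℂ) (t : Finset ℕ) (c : ℕ → ℂ) (n : ℕ) :
    ∑ j ∈ t, ∑ k ∈ t, c j * conj (c k) * empiricalCorrelation ξ j k n
      = (((n : ℝ)⁻¹ * ∑ s ∈ range n, ‖∑ j ∈ t, c j * ξ (s + j)‖ ^ 2 : ℝ) : ℂ) := by
  push_cast
  simp_rw [← Complex.mul_conj', map_sum, sum_mul_sum, mul_sum, empiricalCorrelation, mul_sum]
  conv_rhs => rw [sum_comm]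
  refine sum_congr rfl fun j _ => ?_
  conv_rhs => rw [sum_comm]
  refine sum_congr rfl fun k _ => sum_congr rfl fun s _ => ?_
  rw [map_mul]
  ring

lemma tendsto_empiricalCorrelation {ξ : ℕ → ℂ} {ρ : ℤ → ℂ}
    (hW : ∀ k : ℕ, Tendsto (fun n : ℕ => (n : ℂ)⁻¹ * ∑ s ∈ range n, ξ s * conj (ξ (s + k)))
      atTop (𝓝 (ρ k)))
    (hneg : ∀ k : ℕ, ρ (-(k : ℤ)) = conj (ρ k)) (j k : ℕ) :
    Tendsto (empiricalCorrelation ξ j k) atTop (𝓝 (ρ (k - j))) := by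
  have forward (j d : ℕ) : Tendsto (empiricalCorrelation ξ j (j + d)) atTop (𝓝 (ρ d)) := by
    have h := (hW d).inv_smul_sum_range_add (𝕜 := ℂ) (f := fun s => ξ s * conj (ξ (s + d))) j
    simp only [smul_eq_mul, add_assoc] at h
    exact h
  rcases le_total j k with hjk | hkj
  · obtain ⟨d, rfl⟩ := Nat.exists_eq_add_of_le hjk
    simpa using forward j d
  · obtain ⟨d, rfl⟩ := Nat.exists_eq_add_of_le hkj
    have hconj := (Complex.continuous_conj.tendsto _).comp (forward k d)
    simpa [Function.comp_def, conj_empiricalCorrelation, hneg] using hconj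

/-- The correlations of a Wiener sequence form a positive semi-definite function. -/
theorem wiener_correlations_posSemidef (ξ : ℕ → ℂ) (ρ : ℤ → ℂ)
    (hW : ∀ k : ℕ, Tendsto
      (fun n : ℕ => (n : ℂ)⁻¹ * ∑ s ∈ Finset.range n, ξ s * conj (ξ (s + k)))
      atTop (nhds (ρ (k : ℤ))))
    (hneg : ∀ k : ℕ, ρ (-(k : ℤ)) = conj (ρ (k : ℤ))) :
    ∀ (m : ℕ) (c : ℕ → ℂ),
      0 ≤ (∑ j ∈ Finset.range (m + 1), ∑ k ∈ Finset.range (m + 1),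
            c j * conj (c k) * ρ ((k : ℤ) - (j : ℤ))).re ∧
      (∑ j ∈ Finset.range (m + 1), ∑ k ∈ Finset.range (m + 1),
            c j * conj (c k) * ρ ((k : ℤ) - (j : ℤ))).im = 0 := by
  intro m c
  have hlim : Tendsto
      (fun n => ∑ j ∈ range (m + 1), ∑ k ∈ range (m + 1),
        c j * conj (c k) * empiricalCorrelation ξ j k n)
      atTop (𝓝 (∑ j ∈ range (m + 1), ∑ k ∈ range (m + 1), c j * conj (c k) * ρ (k - j))) :=
    tendsto_finsetSum _ fun j _ => tendsto_finsetSum _ fun k _ =>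
      (tendsto_empiricalCorrelation hW hneg j k).const_mul _
  have hnonneg := ge_of_tendsto' hlim fun n => by
    rw [sum_sum_mul_empiricalCorrelation]
    exact Complex.zero_le_real.mpr (by positivity)
  obtain ⟨hre, him⟩ := Complex.nonneg_iff.mp hnonneg
  exact ⟨hre, him.symm⟩
end

section
/- Let r > 0 be large, N an integer with N ≍ r^{1/2} log r (say c₁ √r log r ≤ N ≤ c₂ √r log r), and let ξ : ℤ≥0 → ℂ satisfy |ξ(k)| ≤ C k^{1/2} for all k ≥ 1. Denote by p the largest integer smaller than r − N. Then (√(2πr)/e^r) ∑_{0 ≤ k < r−N} |ξ(k)| r^k / k! ≲ r^{3/2} · exp(−N²/(2r) + O(N³/r²)) = o(1) as r → ∞. -/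
/-!
Since `r ^ k / k!` increases for `k ≤ r`, each of the at most `⌈r⌉` terms with `k < r - N` is at
most `(C + ‖ξ 0‖) √r · r ^ p / p!` with `p = ⌊r - N⌋ ≥ r / 2`. Stirling's lower bound for `p!`
together with `log t ≤ (t - t⁻¹) / 2` for `t ≥ 1` (that is, `y ≤ sinh y`) gives the Gaussian bound
`e⁻ʳ r ^ p / p! ≤ e^(-(r - p)² / (2r)) / √(2πp)` with no cubic error term, so the normalized tail
is `≲ r^(3/2) e^(-N² / (2r))`. For `N ≥ c₁ √r log r` the factor
`e^(-N² / (2r)) ≤ e^(-c₁² (log r)² / 2)` beats every power of `r`.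
-/

open Filter Finset Real Asymptotics
open scoped Classical Nat Topology

theorem pow_div_factorial_le_pow_div_factorial {r : ℝ} {m n : ℕ} (hmn : m ≤ n)
    (hnr : (n : ℝ) ≤ r) : r ^ m / m ! ≤ r ^ n / n ! := by
  induction n, hmn using Nat.le_induction with
  | base => exact le_rfl
  | succ n hmn ih =>
    push_cast at hnr
    have hn : (0 : ℝ) < n + 1 := by positivity
    have hr : 0 ≤ r := by linarith
    calc r ^ m / m ! ≤ r ^ n / n ! := ih (by linarith)
      _ ≤ r / (n + 1) * (r ^ n / n !) :=
        le_mul_of_one_le_left (by positivity) ((one_le_div hn).mpr hnr)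
      _ = r ^ (n + 1) / (n + 1)! := by
        rw [pow_succ, Nat.factorial_succ]; push_cast; field_simp

theorem Real.log_le_sub_inv_div_two {t : ℝ} (ht : 1 ≤ t) : log t ≤ (t - t⁻¹) / 2 := by
  have h := self_le_sinh_iff.mpr (log_nonneg ht)
  rwa [sinh_eq, exp_neg, exp_log (by linarith)] at h

theorem sqrt_two_pi_mul_pow_div_factorial_le {r : ℝ} {p : ℕ} (hp : 0 < p) (hpr : (p : ℝ) ≤ r) :
    √(2 * π * p) * (r ^ p / p !) ≤ exp (r - (r - p) ^ 2 / (2 * r)) := by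
  have hp' : (0 : ℝ) < p := by exact_mod_cast hp
  have hr : 0 < r := hp'.trans_le hpr
  have hlog : p * log (r / p) ≤ (r - p ^ 2 / r) / 2 := by
    calc p * log (r / p) ≤ p * ((r / p - (r / p)⁻¹) / 2) :=
          mul_le_mul_of_nonneg_left (log_le_sub_inv_div_two ((one_le_div hp').mpr hpr)) hp'.le
      _ = (r - p ^ 2 / r) / 2 := by field_simp
  calc √(2 * π * p) * (r ^ p / p !)
      ≤ √(2 * π * p) * (r ^ p / (√(2 * π * p) * (p / exp 1) ^ p)) := by
        gcongr; exact Stirling.le_factorial_stirling p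
    _ = exp (p + p * log (r / p)) := by
        rw [exp_add, exp_nat_mul, exp_log (by positivity), ← exp_one_pow, ← mul_pow]
        field_simp
        rw [← mul_pow]
        field_simp
    _ ≤ exp (p + (r - p ^ 2 / r) / 2) := by gcongr
    _ = exp (r - (r - p) ^ 2 / (2 * r)) := by congr 1; field_simp; ring

theorem sqrt_two_pi_mul_div_exp_mul_pow_div_factorial_le {r : ℝ} {p : ℕ} (hp : 0 < p)
    (hpr : (p : ℝ) ≤ r) (hrp : r ≤ 2 * p) :
    √(2 * π * r) / exp r * (r ^ p / p !) ≤ √2 * exp (-(r - p) ^ 2 / (2 * r)) := by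
  have hsqrt : √(2 * π * r) ≤ √2 * √(2 * π * p) := by
    rw [← sqrt_mul zero_le_two]
    exact sqrt_le_sqrt (by nlinarith [pi_pos])
  have hr : 0 ≤ r := (Nat.cast_nonneg p).trans hpr
  calc √(2 * π * r) / exp r * (r ^ p / p !) = √(2 * π * r) * (r ^ p / p !) / exp r := by ring
    _ ≤ √2 * √(2 * π * p) * (r ^ p / p !) / exp r := by gcongr
    _ = √2 * (√(2 * π * p) * (r ^ p / p !)) / exp r := by ring
    _ ≤ √2 * exp (r - (r - p) ^ 2 / (2 * r)) / exp r := by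
        gcongr; exact sqrt_two_pi_mul_pow_div_factorial_le hp hpr
    _ = √2 * exp (-(r - p) ^ 2 / (2 * r)) := by
        rw [mul_div_assoc, ← exp_sub]; ring_nf

noncomputable def lowerTailSum (a : ℕ → ℝ) (r n : ℝ) : ℝ :=
  ∑ k ∈ range ⌈r⌉₊, if (k : ℝ) < r - n then a k * r ^ k / k ! else 0

theorem lowerTailSum_nonneg {a : ℕ → ℝ} {r : ℝ} (ha : ∀ k, 0 ≤ a k) (hr : 0 ≤ r) (n : ℝ) :
    0 ≤ lowerTailSum a r n :=
  sum_nonneg fun k _ ↦ by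
    split_ifs
    · exact div_nonneg (mul_nonneg (ha k) (pow_nonneg hr k)) (Nat.cast_nonneg _)
    · exact le_rfl

theorem lowerTailSum_le {a : ℕ → ℝ} {r n A : ℝ} (hr : 0 ≤ r) (hn : 0 ≤ n) (hA : 0 ≤ A)
    (ha : ∀ k : ℕ, (k : ℝ) ≤ r → a k ≤ A) :
    lowerTailSum a r n ≤ ⌈r⌉₊ * (A * (r ^ ⌊r - n⌋₊ / ⌊r - n⌋₊ !)) := by
  set p := ⌊r - n⌋₊
  have hpr : (p : ℝ) ≤ r :=
    (Nat.cast_le.mpr (Nat.floor_le_floor (by linarith))).trans (Nat.floor_le hr)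
  have hterm : ∀ k ∈ range ⌈r⌉₊, (if (k : ℝ) < r - n then a k * r ^ k / k ! else 0)
      ≤ A * (r ^ p / p !) := fun k _ ↦ by
    split_ifs with hk
    · have hkp : k ≤ p := Nat.le_floor hk.le
      rw [mul_div_assoc]
      exact mul_le_mul (ha k ((Nat.cast_le.mpr hkp).trans hpr))
        (pow_div_factorial_le_pow_div_factorial hkp hpr) (by positivity) hA
    · positivity
  simpa [lowerTailSum] using sum_le_card_nsmul _ _ _ hterm

theorem sqrt_two_pi_mul_div_exp_mul_lowerTailSum_le {a : ℕ → ℝ} {r n A : ℝ} (hn : 0 ≤ n)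
    (hnr : n ≤ r / 2 - 1) (hA : 0 ≤ A) (ha : ∀ k : ℕ, (k : ℝ) ≤ r → a k ≤ A) :
    √(2 * π * r) / exp r * lowerTailSum a r n ≤ 2 * √2 * A * r * exp (-n ^ 2 / (2 * r)) := by
  set p := ⌊r - n⌋₊
  have hr : 2 ≤ r := by linarith
  have hpn : (p : ℝ) ≤ r - n := Nat.floor_le (by linarith)
  have hrp : r ≤ 2 * p := by linarith [Nat.lt_floor_add_one (r - n)]
  have hp : 0 < p := by exact_mod_cast (show (0 : ℝ) < p by linarith)
  have hceil : (⌈r⌉₊ : ℝ) ≤ 2 * r := by linarith [Nat.ceil_lt_add_one (by linarith : 0 ≤ r)]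
  calc √(2 * π * r) / exp r * lowerTailSum a r n
      ≤ √(2 * π * r) / exp r * (⌈r⌉₊ * (A * (r ^ p / p !))) := by
        gcongr; exact lowerTailSum_le (by linarith) hn hA ha
    _ = ⌈r⌉₊ * A * (√(2 * π * r) / exp r * (r ^ p / p !)) := by ring
    _ ≤ 2 * r * A * (√2 * exp (-(r - p) ^ 2 / (2 * r))) := by
        gcongr ?_ * _ * ?_
        exact sqrt_two_pi_mul_div_exp_mul_pow_div_factorial_le hp (by linarith) hrp
    _ ≤ 2 * r * A * (√2 * exp (-n ^ 2 / (2 * r))) := by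
        gcongr
        nlinarith
    _ = 2 * √2 * A * r * exp (-n ^ 2 / (2 * r)) := by ring

theorem isLittleO_sqrt_mul_log_atTop : (fun r ↦ √r * log r) =o[atTop] id := by
  refine ((isBigO_refl (fun r : ℝ ↦ √r) atTop).mul_isLittleO
    (isLittleO_log_rpow_atTop one_half_pos)).congr' EventuallyEq.rfl ?_
  filter_upwards [eventually_ge_atTop 0] with r hr
  rw [← sqrt_eq_rpow, mul_self_sqrt hr, id]

theorem tendsto_rpow_mul_exp_neg_mul_log_sq (a : ℝ) {c : ℝ} (hc : 0 < c) :
    Tendsto (fun r ↦ r ^ a * exp (-(c * log r ^ 2))) atTop (𝓝 0) := by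
  have h : Tendsto (fun r ↦ log r * (a - c * log r)) atTop atBot := by
    refine tendsto_log_atTop.atTop_mul_atBot₀ ?_
    simpa only [sub_eq_add_neg, Function.comp_def] using tendsto_atBot_add_const_left _ a
      (tendsto_neg_atTop_atBot.comp (tendsto_log_atTop.const_mul_atTop hc))
  refine (tendsto_exp_atBot.comp h).congr' ?_
  filter_upwards [eventually_gt_atTop 0] with r hr
  rw [Function.comp_apply, rpow_def_of_pos hr, ← exp_add]
  ring_nf

theorem tendsto_rpow_mul_exp_neg_sq_div_two_mul {N : ℝ → ℝ} (a : ℝ) {c : ℝ} (hc : 0 < c)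
    (hN : ∀ᶠ r in atTop, c * √r * log r ≤ N r) :
    Tendsto (fun r ↦ r ^ a * exp (-N r ^ 2 / (2 * r))) atTop (𝓝 0) := by
  refine tendsto_of_tendsto_of_tendsto_of_le_of_le' tendsto_const_nhds
    (tendsto_rpow_mul_exp_neg_mul_log_sq a (by positivity : 0 < c ^ 2 / 2)) ?_ ?_
  · filter_upwards [eventually_ge_atTop 0] with r hr
    positivity
  · filter_upwards [hN, eventually_ge_atTop 1] with r hNr hr
    have hsq : c ^ 2 * r * log r ^ 2 ≤ N r ^ 2 := by
      have := pow_le_pow_left₀ (mul_nonneg (by positivity) (log_nonneg hr)) hNr 2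
      rwa [mul_pow, mul_pow, sq_sqrt (by linarith)] at this
    gcongr
    rw [neg_div, neg_le_neg_iff, le_div_iff₀ (by positivity)]
    nlinarith

theorem eventually_le_half_sub_one_of_le_mul_sqrt_mul_log {N : ℝ → ℝ} (c : ℝ)
    (hN : ∀ᶠ r in atTop, N r ≤ c * √r * log r) : ∀ᶠ r in atTop, N r ≤ r / 2 - 1 := by
  filter_upwards [hN, (isLittleO_sqrt_mul_log_atTop.const_mul_left c).bound
    (by norm_num : (0 : ℝ) < 1 / 4), eventually_ge_atTop 4] with r hNr hsmall hr
  rw [norm_eq_abs, norm_eq_abs, id, abs_of_nonneg (show (0 : ℝ) ≤ r by linarith),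
    ← mul_assoc] at hsmall
  linarith [le_abs_self (c * √r * log r)]

theorem norm_le_mul_sqrt_of_le {E : Type*} [SeminormedAddGroup E] {ξ : ℕ → E} {C : ℝ} (hC : 0 ≤ C)
    (hξ : ∀ k : ℕ, 1 ≤ k → ‖ξ k‖ ≤ C * (k : ℝ) ^ ((1 : ℝ) / 2)) {r : ℝ} (hr : 1 ≤ r) {k : ℕ}
    (hkr : (k : ℝ) ≤ r) : ‖ξ k‖ ≤ (C + ‖ξ 0‖) * √r := by
  rcases Nat.eq_zero_or_pos k with rfl | hk
  · calc ‖ξ 0‖ ≤ C + ‖ξ 0‖ := le_add_of_nonneg_left hC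
      _ ≤ (C + ‖ξ 0‖) * √r := le_mul_of_one_le_right (by positivity) (one_le_sqrt.mpr hr)
  · calc ‖ξ k‖ ≤ C * √k := by simpa only [← sqrt_eq_rpow] using hξ k hk
      _ ≤ (C + ‖ξ 0‖) * √r := by gcongr; exact le_add_of_nonneg_right (norm_nonneg _)

theorem lower_tail_negligible_general (C c₁ c₂ : ℝ) (hC : 0 < C) (hc₁ : 0 < c₁)
    (ξ : ℕ → ℂ) (hξ : ∀ k : ℕ, 1 ≤ k → ‖ξ k‖ ≤ C * (k : ℝ) ^ ((1 : ℝ) / 2))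
    (N : ℝ → ℝ)
    (hN : ∀ᶠ r in atTop, c₁ * Real.sqrt r * Real.log r ≤ N r ∧
      N r ≤ c₂ * Real.sqrt r * Real.log r) :
    (∃ C' C'' : ℝ, 0 < C' ∧ 0 < C'' ∧ ∀ᶠ r in atTop,
      Real.sqrt (2 * π * r) / Real.exp r *
        ∑ k ∈ Finset.range ⌈r⌉₊, (if (k : ℝ) < r - N r then ‖ξ k‖ * r ^ k / (k.factorial : ℝ) else 0)
      ≤ C' * r ^ ((3 : ℝ) / 2) * Real.exp (-(N r) ^ 2 / (2 * r) + C'' * (N r) ^ 3 / r ^ 2)) ∧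
    Tendsto (fun r : ℝ =>
      Real.sqrt (2 * π * r) / Real.exp r *
        ∑ k ∈ Finset.range ⌈r⌉₊, (if (k : ℝ) < r - N r then ‖ξ k‖ * r ^ k / (k.factorial : ℝ) else 0))
      atTop (nhds 0) := by
  set D := C + ‖ξ 0‖
  have hN_nonneg : ∀ᶠ r in atTop, 0 ≤ N r := by
    filter_upwards [hN, eventually_ge_atTop 1] with r hNr hr
    exact (mul_nonneg (by positivity) (log_nonneg hr)).trans hNr.1
  have hbound : ∀ᶠ r in atTop, √(2 * π * r) / exp r * lowerTailSum (‖ξ ·‖) r (N r)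
      ≤ 2 * √2 * D * (r ^ ((3 : ℝ) / 2) * exp (-(N r) ^ 2 / (2 * r))) := by
    filter_upwards [hN_nonneg, eventually_le_half_sub_one_of_le_mul_sqrt_mul_log c₂
      (hN.mono fun _ h ↦ h.2), eventually_ge_atTop 1] with r h0 hle hr
    rw [show r ^ ((3 : ℝ) / 2) = r * √r by
      rw [sqrt_eq_rpow, ← rpow_one_add' (by linarith) (by norm_num)]; norm_num]
    convert sqrt_two_pi_mul_div_exp_mul_lowerTailSum_le h0 hle (by positivity)
      (fun k ↦ norm_le_mul_sqrt_of_le hC.le hξ hr) using 1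
    ring
  refine ⟨⟨2 * √2 * D, 1, by positivity, one_pos, ?_⟩, ?_⟩
  · filter_upwards [hbound, hN_nonneg, eventually_ge_atTop 0] with r h h0 hr
    rw [← mul_assoc] at h
    exact h.trans (by gcongr; exact le_add_of_nonneg_right (by positivity))
  · have hlim := (tendsto_rpow_mul_exp_neg_sq_div_two_mul (3 / 2) hc₁
      (hN.mono fun _ h ↦ h.1)).const_mul (2 * √2 * D)
    rw [mul_zero] at hlim
    refine tendsto_of_tendsto_of_tendsto_of_le_of_le' tendsto_const_nhds hlim ?_ hbound
    filter_upwards [eventually_ge_atTop 0] with r hr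
    exact mul_nonneg (by positivity) (lowerTailSum_nonneg (fun k ↦ norm_nonneg _) hr _)

/-- The lower tail `k < r - N` of the Taylor series, with `N ≍ √r log r` and
`|ξ(k)| ≲ √k`, is `≲ r^{3/2} exp(-N²/(2r) + O(N³/r²)) = o(U(r))`, `U(r) = e^r/√(2πr)`. -/
theorem lower_tail_negligible (C c₁ c₂ : ℝ) (hC : 0 < C) (hc₁ : 0 < c₁) (hc : c₁ ≤ c₂)
    (ξ : ℕ → ℂ) (hξ : ∀ k : ℕ, 1 ≤ k → ‖ξ k‖ ≤ C * (k : ℝ) ^ ((1 : ℝ) / 2))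
    (N : ℝ → ℝ)
    (hN : ∀ᶠ r in atTop, c₁ * Real.sqrt r * Real.log r ≤ N r ∧
      N r ≤ c₂ * Real.sqrt r * Real.log r) :
    (∃ C' C'' : ℝ, 0 < C' ∧ 0 < C'' ∧ ∀ᶠ r in atTop,
      Real.sqrt (2 * π * r) / Real.exp r *
        ∑ k ∈ Finset.range ⌈r⌉₊, (if (k : ℝ) < r - N r then ‖ξ k‖ * r ^ k / (k.factorial : ℝ) else 0)
      ≤ C' * r ^ ((3 : ℝ) / 2) * Real.exp (-(N r) ^ 2 / (2 * r) + C'' * (N r) ^ 3 / r ^ 2)) ∧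
    Tendsto (fun r : ℝ =>
      Real.sqrt (2 * π * r) / Real.exp r *
        ∑ k ∈ Finset.range ⌈r⌉₊, (if (k : ℝ) < r - N r then ‖ξ k‖ * r ^ k / (k.factorial : ℝ) else 0))
      atTop (nhds 0) :=
  lower_tail_negligible_general C c₁ c₂ hC hc₁ ξ hξ N hN
end

section
/- Fix an integer k ≥ 1. Let B = {(s₁, s₂) ∈ [m, λm]² ∩ ℤ² : s₁(s₁+k)s₂(s₂+k) is a perfect square}. Then card(B) = O(m^{7/4}) uniformly in λ ∈ [1, 2]; more precisely, for every ε > 0, card(B) ≲_ε m^{5/3 + ε}. -/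
open Finset
open scoped Classical

/-!
If `s(s+k) · s'(s'+k)` is a square, then `s(s+k) = c b²` and `s'(s'+k) = c b'²` share a
core `c`, so `X = 2s+k` and `X' = 2s'+k` both solve the Pell-type equation `X² - 4cY² = k²`.
Composing two solutions gives a solution `(U, V)` of `U² - 4cV² = k⁴` with `V ≠ 0` and
`UX ≤ k²X'`, whence `(k⁴ + 1) X² ≤ k⁴ X'²`. These gaps leave room for at most `4k⁴ + 1`
values of `s₂ ∈ [m, 2m]` for each `s₁`, so the number of pairs is `O_k(m)`, which is
stronger than both claimed bounds.
-/

theorem Nat.isSquare_mul_of_isSquare_mul_left {a x y : ℕ} (ha : a ≠ 0) (hx : IsSquare (a * x))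
    (hy : IsSquare (a * y)) : IsSquare (x * y) := by
  have hxy : ((x * y : ℕ) : ℚ) = (a * x : ℕ) * (a * y : ℕ) / (a * a) := by
    push_cast; field_simp
  rw [← Rat.isSquare_natCast_iff, hxy]
  exact ((Rat.isSquare_natCast_iff.2 hx).mul (Rat.isSquare_natCast_iff.2 hy)).div
    (IsSquare.mul_self _)

theorem Nat.exists_eq_mul_sq_of_isSquare_mul {x y : ℕ} (h : IsSquare (x * y)) :
    ∃ c b b', x = c * b ^ 2 ∧ y = c * b' ^ 2 := by
  rcases (Nat.gcd x y).eq_zero_or_pos with hg | hg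
  · exact ⟨0, 0, 0, by simp [Nat.eq_zero_of_gcd_eq_zero_left hg],
      by simp [Nat.eq_zero_of_gcd_eq_zero_right hg]⟩
  obtain ⟨g, u, v, hg, huv, rfl, rfl⟩ := Nat.exists_coprime' hg
  obtain ⟨w, hw⟩ : IsSquare (u * v) := by
    simpa using Nat.isSquare_mul_of_isSquare_mul_left (x := u * v) (y := 1) (a := g * g)
      (by positivity) (by convert h using 1; ring) (by simp)
  obtain ⟨b, rfl⟩ := exists_eq_pow_of_mul_eq_pow (Nat.isUnit_iff.2 huv) (hw.trans (sq w).symm)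
  obtain ⟨b', rfl⟩ := exists_eq_pow_of_mul_eq_pow (Nat.isUnit_iff.2 huv.symm)
    ((mul_comm _ _).trans (hw.trans (sq w).symm))
  exact ⟨g, b, b', mul_comm _ _, mul_comm _ _⟩

theorem Int.pell_gap {D N X X' Y Y' : ℤ} (hD : 0 < D) (hN : 0 < N) (hY : 0 ≤ Y) (hY' : 0 ≤ Y')
    (hX : 0 < X) (hXX' : X < X') (h : X ^ 2 - D * Y ^ 2 = N) (h' : X' ^ 2 - D * Y' ^ 2 = N) :
    (N ^ 2 + D) * X ^ 2 ≤ N ^ 2 * X' ^ 2 := by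
  set U := X * X' - D * Y * Y'
  set V := X * Y' - X' * Y
  have hUV : U ^ 2 - D * V ^ 2 = N ^ 2 := by
    linear_combination (X' ^ 2 - D * Y' ^ 2) * h + N * h'
  have hUX : N * X' - U * X = D * Y * V := by linear_combination -X' * h
  have hV : 0 < V := by
    have hYY' : Y ^ 2 < Y' ^ 2 := by
      have : D * (Y' ^ 2 - Y ^ 2) = X' ^ 2 - X ^ 2 := by linear_combination h - h'
      nlinarith
    have : (X * Y') ^ 2 - (X' * Y) ^ 2 = N * (Y' ^ 2 - Y ^ 2) := by
      linear_combination Y' ^ 2 * h - Y ^ 2 * h'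
    have : (X' * Y) ^ 2 < (X * Y') ^ 2 := by nlinarith
    linarith [lt_of_pow_lt_pow_left₀ 2 (by positivity) this]
  have hU : 0 < U := by
    have : (X * X') ^ 2 - (D * Y * Y') ^ 2 = D * N * (Y ^ 2 + Y' ^ 2) + N ^ 2 := by
      linear_combination X' ^ 2 * h + (D * Y ^ 2 + N) * h'
    have : (D * Y * Y') ^ 2 < (X * X') ^ 2 := by
      linarith [show 0 < D * N * (Y ^ 2 + Y' ^ 2) + N ^ 2 by positivity]
    linarith [lt_of_pow_lt_pow_left₀ 2 (by nlinarith) this]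
  have hUX : U * X ≤ N * X' := by nlinarith [mul_nonneg (mul_nonneg hD.le hY) hV.le]
  have hU2 : N ^ 2 + D ≤ U ^ 2 := by
    nlinarith [mul_le_mul_of_nonneg_left (one_le_pow₀ hV (n := 2)) hD.le]
  calc (N ^ 2 + D) * X ^ 2 ≤ U ^ 2 * X ^ 2 := by gcongr
    _ = (U * X) ^ 2 := by ring
    _ ≤ (N * X') ^ 2 := by gcongr
    _ = N ^ 2 * X' ^ 2 := by ring

theorem Finset.mul_card_le_add_of_forall_add_le {α : Type*} [LinearOrder α] {T : Finset α}
    {f : α → ℕ} {G B : ℕ} (hgap : ∀ s ∈ T, ∀ s' ∈ T, s < s' → f s + G ≤ f s')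
    (hB : ∀ s ∈ T, f s ≤ B) : G * #T ≤ B + G := by
  induction T using Finset.induction_on_max generalizing B with
  | empty => simp
  | insert a T hlt ih =>
    have hgap' : ∀ s ∈ T, f s + G ≤ f a := fun s hs =>
      hgap s (mem_insert_of_mem hs) a (mem_insert_self a T) (hlt s hs)
    have hT : G * #T ≤ f a - G + G :=
      ih (fun s hs s' hs' => hgap s (mem_insert_of_mem hs) s' (mem_insert_of_mem hs'))
        (fun s hs => by have := hgap' s hs; omega)
    have hfa := hB a (mem_insert_self a T)
    rw [card_insert_of_notMem fun ha => (hlt a ha).false, mul_add_one]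
    rcases T.eq_empty_or_nonempty with rfl | ⟨s, hs⟩
    · simp
    · have := hgap' s hs
      omega

theorem sq_two_mul_add_gap_of_isSquare {k s s' : ℕ} (hk : 0 < k) (hss' : s < s')
    (h : IsSquare (s * (s + k) * (s' * (s' + k)))) :
    k ^ 4 * (2 * s + k) ^ 2 + (2 * s + k) ^ 2 ≤ k ^ 4 * (2 * s' + k) ^ 2 := by
  obtain ⟨c, b, b', hb, hb'⟩ := Nat.exists_eq_mul_sq_of_isSquare_mul h
  have hc : 0 < c := by
    rcases c.eq_zero_or_pos with rfl | hc
    · simp at hb'; omega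
    · exact hc
  zify at hb hb' ⊢
  have hpell := Int.pell_gap (D := 4 * c) (N := k ^ 2) (X := 2 * s + k) (X' := 2 * s' + k)
    (Y := b) (Y' := b') (by positivity) (by positivity) (by positivity) (by positivity)
    (by positivity) (by omega)
    (by linear_combination 4 * hb) (by linear_combination 4 * hb')
  nlinarith [sq_nonneg (2 * (s : ℤ) + k)]

theorem card_filter_isSquare_mul_shift_le {k a : ℕ} (hk : 0 < k) (ha : a ≠ 0) (m : ℕ) :
    #{s ∈ Icc m (2 * m) | IsSquare (a * (s * (s + k)))} ≤ 4 * k ^ 4 + 1 := by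
  set T := {s ∈ Icc m (2 * m) | IsSquare (a * (s * (s + k)))}
  have hmem : ∀ s ∈ T, m ≤ s ∧ s ≤ 2 * m ∧ IsSquare (a * (s * (s + k))) := by
    simp +contextual [T]
  have hcount : (2 * m + k) ^ 2 * #T ≤ k ^ 4 * (4 * m + k) ^ 2 + (2 * m + k) ^ 2 := by
    refine mul_card_le_add_of_forall_add_le (f := fun s => k ^ 4 * (2 * s + k) ^ 2)
      (fun s hs s' hs' hss' => ?_) (fun s hs => ?_)
    · have hgap := sq_two_mul_add_gap_of_isSquare hk hss'
        (Nat.isSquare_mul_of_isSquare_mul_left ha (hmem s hs).2.2 (hmem s' hs').2.2)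
      have : (2 * m + k) ^ 2 ≤ (2 * s + k) ^ 2 := by gcongr; exact (hmem s hs).1
      linarith
    · have : 2 * s + k ≤ 4 * m + k := by have := (hmem s hs).2.1; omega
      gcongr
  have : (2 * m + k) ^ 2 * #T ≤ (2 * m + k) ^ 2 * (4 * k ^ 4 + 1) := by
    have : k ^ 4 * (4 * m + k) ^ 2 ≤ k ^ 4 * (2 * (2 * m + k)) ^ 2 := by gcongr; omega
    nlinarith
  exact Nat.le_of_mul_le_mul_left this (by positivity)

def squareProductPairs (k m M : ℕ) : Finset (ℕ × ℕ) :=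
  {p ∈ Icc m M ×ˢ Icc m M | IsSquare (p.1 * (p.1 + k) * (p.2 * (p.2 + k)))}

theorem card_squareProductPairs_le {k m : ℕ} (hk : 0 < k) (hm : 0 < m) :
    #(squareProductPairs k m (2 * m)) ≤ (4 * k ^ 4 + 1) * (m + 1) := by
  have hcard := card_le_mul_card_image_of_maps_to (s := squareProductPairs k m (2 * m))
    (f := Prod.fst) (t := Icc m (2 * m))
    (fun p hp => (mem_product.1 (mem_filter.1 hp).1).1) (4 * k ^ 4 + 1) fun a ha => ?_
  · rwa [Nat.card_Icc, show 2 * m + 1 - m = m + 1 by omega] at hcard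
  have ha0 : a * (a + k) ≠ 0 := by
    have := (mem_Icc.1 ha).1
    exact Nat.mul_ne_zero (by omega) (by omega)
  refine le_trans (card_le_card_of_injOn Prod.snd (fun p hp => ?_) fun p hp q hq hpq => ?_)
    (card_filter_isSquare_mul_shift_le hk ha0 m)
  · simp only [squareProductPairs, mem_coe, mem_filter, mem_product] at hp
    obtain ⟨⟨⟨-, hp2⟩, hsq⟩, rfl⟩ := hp
    exact mem_filter.2 ⟨hp2, hsq⟩
  · simp only [mem_coe, mem_filter] at hp hq
    exact Prod.ext (hp.2.trans hq.2.symm) hpq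

theorem card_squareProductPairs_le_rpow {k m : ℕ} (hk : 0 < k) (hm : 1 ≤ m) {lam : ℝ}
    (hlam : lam ≤ 2) {e : ℝ} (he : 1 ≤ e) :
    (#(squareProductPairs k m ⌊lam * m⌋₊) : ℝ) ≤ (8 * k ^ 4 + 2) * (m : ℝ) ^ e := by
  have hM : ⌊lam * m⌋₊ ≤ 2 * m := Nat.floor_le_of_le (by push_cast; gcongr)
  have hsub : squareProductPairs k m ⌊lam * m⌋₊ ⊆ squareProductPairs k m (2 * m) :=
    filter_subset_filter _ (product_subset_product (Icc_subset_Icc_right hM)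
      (Icc_subset_Icc_right hM))
  have hnat : #(squareProductPairs k m ⌊lam * m⌋₊) ≤ (8 * k ^ 4 + 2) * m :=
    (card_le_card hsub).trans ((card_squareProductPairs_le hk hm).trans
      (by nlinarith [Nat.mul_le_mul_left (4 * k ^ 4 + 1) (show m + 1 ≤ 2 * m by omega)]))
  calc (#(squareProductPairs k m ⌊lam * m⌋₊) : ℝ) ≤ (8 * k ^ 4 + 2) * (m : ℝ) := by
        exact_mod_cast hnat
    _ ≤ (8 * k ^ 4 + 2) * (m : ℝ) ^ e := by
        gcongr; exact Real.self_le_rpow_of_one_le (by exact_mod_cast hm) he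

/-- Counting pairs `(s₁,s₂) ∈ [m, λm]²` with `s₁(s₁+k)s₂(s₂+k)` a perfect square:
the count is `O(m^{7/4})` uniformly in `λ ∈ [1,2]`, and in fact `≲_ε m^{5/3+ε}`. -/
theorem square_product_pairs_count (k : ℕ) (hk : 1 ≤ k) :
    (∃ C : ℝ, 0 < C ∧ ∀ m : ℕ, 1 ≤ m → ∀ lam ∈ Set.Icc (1 : ℝ) 2,
      (((Finset.Icc m ⌊lam * (m : ℝ)⌋₊ ×ˢ Finset.Icc m ⌊lam * (m : ℝ)⌋₊).filter
        (fun p : ℕ × ℕ => IsSquare (p.1 * (p.1 + k) * (p.2 * (p.2 + k))))).card : ℝ)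
        ≤ C * (m : ℝ) ^ ((7 : ℝ) / 4)) ∧
    ∀ ε : ℝ, 0 < ε → ∃ C : ℝ, 0 < C ∧ ∀ m : ℕ, 1 ≤ m → ∀ lam ∈ Set.Icc (1 : ℝ) 2,
      (((Finset.Icc m ⌊lam * (m : ℝ)⌋₊ ×ˢ Finset.Icc m ⌊lam * (m : ℝ)⌋₊).filter
        (fun p : ℕ × ℕ => IsSquare (p.1 * (p.1 + k) * (p.2 * (p.2 + k))))).card : ℝ)
        ≤ C * (m : ℝ) ^ ((5 : ℝ) / 3 + ε) := by
  have hC : (0 : ℝ) < 8 * k ^ 4 + 2 := by positivity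
  exact ⟨⟨_, hC, fun m hm lam hlam =>
      card_squareProductPairs_le_rpow hk hm hlam.2 (by norm_num)⟩,
    fun ε hε => ⟨_, hC, fun m hm lam hlam =>
      card_squareProductPairs_le_rpow hk hm hlam.2 (by linarith)⟩⟩
end

section
/- Let (a_n)_{n≥1} be a sequence of positive integers such that for every k ≥ 1 the sequence (a_{n+k} − a_n)_{n≥1} consists of distinct integers. Then for (Lebesgue) almost every real x, the sequence ξ(n) = e^{2πi a_n x} is a Wiener sequence whose spectral correlations satisfy ρ(0) = 1 and ρ(k) = 0 for all k ≥ 1 (i.e., its spectral measure is Lebesgue measure on the circle). -/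
open Finset Filter MeasureTheory Real ComplexConjugate
open scoped Topology FourierTransform

/-!
Write `e(t) = exp(2πit)`. The summand `e(a_s x) conj e(a_{s+k} x)` is `e(b_s x)` with
`b_s = a_s - a_{s+k}`, a sequence of distinct integers, so the claim is Weyl's theorem for `b`.
By orthogonality of the characters `e(mx)` on a unit interval, `S_n(x) = ∑_{s<n} e(b_s x)` has
`∫ |S_n|² = n`. Hence `∑_m ∫ |S_{m²}/m²|² = ∑_m 1/m² < ∞`, so `S_{m²}/m² → 0` almost
everywhere, and `|S_n - S_{m²}| ≤ 2m` for `m² ≤ n < (m+1)²` fills the gaps between squares.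
-/

lemma fourierChar_mul_conj (u v : ℝ) : (𝐞 u : ℂ) * conj (𝐞 v : ℂ) = 𝐞 (u - v) := by
  rw [← Circle.coe_inv_eq_conj, ← Circle.coe_mul, ← AddChar.map_neg_eq_inv,
    ← AddChar.map_add_eq_mul, sub_eq_add_neg]

lemma integral_fourierChar_intCast_mul (t : ℝ) (m : ℤ) :
    ∫ x in t..t + 1, (𝐞 (m * x) : ℂ) = if m = 0 then 1 else 0 := by
  split_ifs with hm
  · simp [hm]
  set c : ℂ := 2 * π * m * Complex.I with hc_def
  have hc : c ≠ 0 := by simp [c, pi_ne_zero, hm]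
  have hexp (x : ℝ) : (𝐞 (m * x) : ℂ) = Complex.exp (c * x) := by
    rw [fourierChar_apply, hc_def]; push_cast; ring_nf
  have hperiod : Complex.exp (c * ↑(t + 1)) = Complex.exp (c * t) := by
    have hone : Complex.exp c = 1 := Complex.exp_eq_one_iff.2 ⟨m, by rw [hc_def]; ring⟩
    rw [Complex.ofReal_add, Complex.ofReal_one, mul_add, mul_one, Complex.exp_add, hone,
      mul_one]
  simp only [hexp, integral_exp_mul_complex hc, hperiod, sub_self, zero_div]

lemma integral_norm_sum_fourierChar_sq {b : ℕ → ℤ} (hb : Function.Injective b) (t : ℝ)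
    (n : ℕ) :
    ∫ x in t..t + 1, ‖∑ s ∈ range n, (𝐞 (b s * x) : ℂ)‖ ^ 2 = n := by
  have hcont (m : ℤ) : Continuous fun x : ℝ => (𝐞 (m * x) : ℂ) := by fun_prop
  have hexpand (x : ℝ) : ((‖∑ s ∈ range n, (𝐞 (b s * x) : ℂ)‖ ^ 2 : ℝ) : ℂ) =
      ∑ s ∈ range n, ∑ r ∈ range n, (𝐞 ((b s - b r : ℤ) * x) : ℂ) := by
    rw [Complex.ofReal_pow, ← Complex.mul_conj', map_sum, sum_mul_sum]
    refine sum_congr rfl fun s _ => sum_congr rfl fun r _ => ?_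
    rw [fourierChar_mul_conj]; push_cast; ring_nf
  apply Complex.ofReal_injective
  rw [← intervalIntegral.integral_ofReal]
  simp only [hexpand]
  rw [intervalIntegral.integral_finsetSum fun s _ =>
    (continuous_finsetSum _ fun r _ => hcont _).intervalIntegrable _ _]
  simp only [intervalIntegral.integral_finsetSum fun r _ => (hcont _).intervalIntegrable _ _,
    integral_fourierChar_intCast_mul, sub_eq_zero, hb.eq_iff, sum_ite_eq]
  rw [sum_ite_of_true fun s hs => hs]
  simp

lemma ae_tendsto_zero_of_summable_integral_norm {X E : Type*} [MeasurableSpace X]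
    {μ : Measure X} [NormedAddCommGroup E] {f : ℕ → X → E} (hf : ∀ n, Integrable (f n) μ)
    (hsum : Summable fun n => ∫ x, ‖f n x‖ ∂μ) :
    ∀ᵐ x ∂μ, Tendsto (fun n => f n x) atTop (𝓝 0) := by
  have htsum : ∑' n, eLpNorm (f n) 1 μ ≠ ⊤ := by
    simp_rw [eLpNorm_one_eq_lintegral_enorm, ← ofReal_integral_norm_eq_lintegral_enorm (hf _)]
    rw [← ENNReal.ofReal_tsum_of_nonneg (fun n => integral_nonneg fun x => norm_nonneg _) hsum]
    exact ENNReal.ofReal_ne_top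
  filter_upwards [summable_norm_of_tsum_eLpNorm_ne_top le_rfl (fun n => (hf n).1) htsum]
    with x hx
  exact tendsto_zero_iff_norm_tendsto_zero.2 hx.tendsto_atTop_zero

section BoundedTerms

variable {E : Type*} [SeminormedAddCommGroup E] {u : ℕ → E} {C : ℝ}

lemma norm_sum_range_le_add_of_le (hu : ∀ s, ‖u s‖ ≤ C) {m n : ℕ} (hmn : m ≤ n) :
    ‖∑ s ∈ range n, u s‖ ≤ ‖∑ s ∈ range m, u s‖ + (n - m) * C := by
  rw [← sum_range_add_sum_Ico _ hmn]
  refine (norm_add_le _ _).trans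
    (add_le_add_right ((norm_sum_le_of_le _ fun s _ => hu s).trans_eq ?_) _)
  rw [sum_const, Nat.card_Ico, nsmul_eq_mul, Nat.cast_sub hmn]

lemma tendsto_norm_sum_range_div_of_tendsto_sq (hu : ∀ s, ‖u s‖ ≤ C)
    (h : Tendsto (fun m : ℕ => ‖∑ s ∈ range (m ^ 2), u s‖ / (m : ℝ) ^ 2) atTop (𝓝 0)) :
    Tendsto (fun n : ℕ => ‖∑ s ∈ range n, u s‖ / n) atTop (𝓝 0) := by
  have hC : 0 ≤ C := (norm_nonneg _).trans (hu 0)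
  have hsqrt : Tendsto Nat.sqrt atTop atTop :=
    tendsto_atTop_atTop.2 fun c => ⟨c * c, fun n hn => Nat.le_sqrt.2 hn⟩
  have hbound : Tendsto (fun n : ℕ => ‖∑ s ∈ range (n.sqrt ^ 2), u s‖ / (n.sqrt : ℝ) ^ 2
      + 2 * C / n.sqrt) atTop (𝓝 0) := by
    simpa using
      (h.comp hsqrt).add ((tendsto_const_div_atTop_nhds_zero_nat (2 * C)).comp hsqrt)
  refine squeeze_zero' (Eventually.of_forall fun n => by positivity) ?_ hbound
  filter_upwards [eventually_ge_atTop 1] with n hn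
  set m := n.sqrt
  have hm : (1 : ℝ) ≤ m := by exact_mod_cast Nat.le_sqrt.2 hn
  have hlow : (m : ℝ) ^ 2 ≤ n := by exact_mod_cast Nat.sqrt_le' n
  have hhigh : (n : ℝ) ≤ m ^ 2 + 2 * m := by
    exact_mod_cast Nat.le_of_lt_succ (by nlinarith [Nat.lt_succ_sqrt' n])
  have htail := norm_sum_range_le_add_of_le hu (Nat.sqrt_le' n : m ^ 2 ≤ n)
  push_cast at htail
  calc ‖∑ s ∈ range n, u s‖ / n
      ≤ (‖∑ s ∈ range (m ^ 2), u s‖ + 2 * m * C) / (m : ℝ) ^ 2 := by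
        refine div_le_div₀ (by positivity) (htail.trans ?_) (by positivity) hlow
        gcongr
        linarith
    _ = ‖∑ s ∈ range (m ^ 2), u s‖ / (m : ℝ) ^ 2 + 2 * C / m := by
        field_simp

end BoundedTerms

section Weyl

variable {b : ℕ → ℤ}

lemma ae_restrict_Ioc_tendsto_norm_sum_fourierChar_div (hb : Function.Injective b) (t : ℝ) :
    ∀ᵐ x ∂volume.restrict (Set.Ioc t (t + 1)),
      Tendsto (fun n : ℕ => ‖∑ s ∈ range n, (𝐞 (b s * x) : ℂ)‖ / n) atTop (𝓝 0) := by
  set S : ℕ → ℝ → ℂ := fun n x => ∑ s ∈ range n, (𝐞 (b s * x) : ℂ)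
  have hint (m : ℕ) :
      ∫ x in Set.Ioc t (t + 1), ‖(‖S (m ^ 2) x‖ / (m : ℝ) ^ 2) ^ 2‖ = 1 / (m : ℝ) ^ 2 := by
    simp only [norm_pow, norm_div, norm_norm, div_pow, RCLike.norm_natCast]
    rw [integral_div, ← intervalIntegral.integral_of_le (by linarith),
      integral_norm_sum_fourierChar_sq hb]
    rcases eq_or_ne m 0 with rfl | hm
    · simp
    · field_simp
      push_cast
      ring
  have hsq := ae_tendsto_zero_of_summable_integral_norm
    (f := fun m x => (‖S (m ^ 2) x‖ / (m : ℝ) ^ 2) ^ 2)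
    (μ := volume.restrict (Set.Ioc t (t + 1)))
    (fun m => Continuous.integrableOn_Ioc (by fun_prop))
    (by simpa only [hint] using Real.summable_one_div_nat_pow.2 one_lt_two)
  filter_upwards [hsq] with x hx
  refine tendsto_norm_sum_range_div_of_tendsto_sq (C := 1) (fun _ => (Circle.norm_coe _).le) ?_
  simpa [S, Real.sqrt_sq_eq_abs, abs_div] using hx.sqrt

theorem ae_tendsto_inv_mul_sum_fourierChar (hb : Function.Injective b) :
    ∀ᵐ x : ℝ,
      Tendsto (fun n : ℕ => (n : ℂ)⁻¹ * ∑ s ∈ range n, (𝐞 (b s * x) : ℂ)) atTop (𝓝 0) := by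
  rw [← Measure.restrict_univ (μ := volume), ← iUnion_Ioc_intCast, ae_restrict_iUnion_iff]
  intro j
  filter_upwards [ae_restrict_Ioc_tendsto_norm_sum_fourierChar_div hb j] with x hx
  rw [tendsto_zero_iff_norm_tendsto_zero]
  simpa only [inv_mul_eq_div, norm_div, Complex.norm_natCast] using hx

end Weyl

lemma exp_mul_conj_exp_eq_fourierChar (c d : ℕ) (x : ℝ) :
    Complex.exp ((2 * π * (c : ℝ) * x : ℝ) * Complex.I) *
      conj (Complex.exp ((2 * π * (d : ℝ) * x : ℝ) * Complex.I)) =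
        𝐞 (((c - d : ℤ) : ℝ) * x) := by
  simp only [mul_assoc (2 * π), ← fourierChar_apply, fourierChar_mul_conj, ← sub_mul]
  push_cast
  rfl

theorem weyl_wiener_sequence_general (a : ℕ → ℕ)
    (hdist : ∀ k : ℕ, 1 ≤ k → Function.Injective (fun n : ℕ => ((a (n + k) : ℤ) - (a n : ℤ)))) :
    ∀ᵐ x : ℝ,
      (∀ k : ℕ, 1 ≤ k →
        Tendsto (fun n : ℕ => (n : ℂ)⁻¹ * ∑ s ∈ Finset.range n,
            Complex.exp ((2 * π * (a s : ℝ) * x : ℝ) * Complex.I) *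
              conj (Complex.exp ((2 * π * (a (s + k) : ℝ) * x : ℝ) * Complex.I)))
          atTop (nhds 0)) ∧
      Tendsto (fun n : ℕ => (n : ℂ)⁻¹ * ∑ s ∈ Finset.range n,
          Complex.exp ((2 * π * (a s : ℝ) * x : ℝ) * Complex.I) *
            conj (Complex.exp ((2 * π * (a s : ℝ) * x : ℝ) * Complex.I)))
        atTop (nhds 1) := by
  simp only [exp_mul_conj_exp_eq_fourierChar, sub_self, Int.cast_zero, zero_mul,
    AddChar.map_zero_eq_one, Circle.coe_one, sum_const, card_range, nsmul_eq_mul, mul_one]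
  have hρ₀ : Tendsto (fun n : ℕ => (n : ℂ)⁻¹ * n) atTop (𝓝 1) :=
    tendsto_const_nhds.congr' <| (eventually_ne_atTop 0).mono fun n hn =>
      (inv_mul_cancel₀ (Nat.cast_ne_zero.2 hn)).symm
  refine (ae_all_iff.2 fun k => ?_).mono fun x hx => ⟨hx, hρ₀⟩
  refine eventually_imp_distrib_left.2 fun hk => ?_
  have hb : Function.Injective fun s => (a s : ℤ) - a (s + k) := by
    simpa only [Function.comp_def, neg_sub] using neg_injective.comp (hdist k hk)
  exact ae_tendsto_inv_mul_sum_fourierChar hb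

/-- If all difference sequences `(a_{n+k} - a_n)` consist of distinct integers, then
for almost every `x` the sequence `e(a_n x)` is a Wiener sequence with
`ρ(k) = 0` for `k ≥ 1` and `ρ(0) = 1` (Lebesgue spectral measure). -/
theorem weyl_wiener_sequence (a : ℕ → ℕ) (ha : ∀ n, 0 < a n)
    (hdist : ∀ k : ℕ, 1 ≤ k → Function.Injective (fun n : ℕ => ((a (n + k) : ℤ) - (a n : ℤ)))) :
    ∀ᵐ x : ℝ,
      (∀ k : ℕ, 1 ≤ k →
        Tendsto (fun n : ℕ => (n : ℂ)⁻¹ * ∑ s ∈ Finset.range n,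
            Complex.exp ((2 * π * (a s : ℝ) * x : ℝ) * Complex.I) *
              conj (Complex.exp ((2 * π * (a (s + k) : ℝ) * x : ℝ) * Complex.I)))
          atTop (nhds 0)) ∧
      Tendsto (fun n : ℕ => (n : ℂ)⁻¹ * ∑ s ∈ Finset.range n,
          Complex.exp ((2 * π * (a s : ℝ) * x : ℝ) * Complex.I) *
            conj (Complex.exp ((2 * π * (a s : ℝ) * x : ℝ) * Complex.I)))
        atTop (nhds 1) :=
  weyl_wiener_sequence_general a hdist
end

section
/- Let α > 0 and 1 < β < 2. Then for every fixed positive integer m, |∑_{0 ≤ s < n} e^{2πi(α(s+m)^β − α s^β)}| ≲ n^{(3−β)/2} = o(n) as n → ∞. Consequently ξ(n) = e^{2πi α n^β} is a Wiener sequence with ρ(k) = 0 for all k ≥ 1 and ρ(0) = 1. -/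
open Finset Filter Real ComplexConjugate

/-!
Write `e(x) = exp(2πix)` and `ψ(s) = φ(s+1) - φ(s)` for the phase `φ(s) = α(s+m)^β - αs^β`.
Since `H(t) = (t+m)^β - t^β` is concave with `H'(t) = β((t+m)^(β-1) - t^(β-1)) ≍ t^(β-2)`,
the increments `ψ` decrease to `0` and `ψ(s) ≳ n^(β-2)` for `s < n`. The Kusmin–Landau
inequality (Abel summation against `(e(ψ(s)) - 1)⁻¹`) bounds a sum of `e(φ(s))` with
monotone increments in `[δ, 1/2]` by `2/δ`; after discarding the finitely many `s` with
`ψ(s) > 1/2` this gives `O(n^(2-β))`, which is at most `n^((3-β)/2)`. The correlations of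
`e(αn^β)` are complex conjugates of these sums, so after division by `n` they tend to `0`.
-/

local notation "𝐞" x:max => Complex.exp (((2 * π * x : ℝ) : ℂ) * Complex.I)

lemma norm_cexp_two_pi (x : ℝ) : ‖𝐞 x‖ = 1 := Complex.norm_exp_ofReal_mul_I _

lemma cexp_two_pi_add (x y : ℝ) : 𝐞 (x + y) = 𝐞 x * 𝐞 y := by
  rw [← Complex.exp_add]; push_cast; ring_nf

lemma norm_cexp_two_pi_sub_one_eq (x : ℝ) : ‖𝐞 x - 1‖ = 2 * |sin (π * x)| := by
  rw [mul_comm _ Complex.I, Complex.norm_exp_I_mul_ofReal_sub_one, norm_mul, Real.norm_eq_abs,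
    Real.norm_eq_abs, abs_two]
  ring_nf

lemma four_mul_le_norm_cexp_two_pi_sub_one {x : ℝ} (hx₀ : 0 ≤ x) (hx₁ : x ≤ 1 / 2) :
    4 * x ≤ ‖𝐞 x - 1‖ := by
  have hsin := mul_le_sin (by positivity : 0 ≤ π * x) (by nlinarith [pi_pos])
  rw [norm_cexp_two_pi_sub_one_eq]
  field_simp at hsin
  nlinarith [le_abs_self (sin (π * x))]

lemma norm_cexp_two_pi_sub_cexp_two_pi_le (x y : ℝ) : ‖𝐞 x - 𝐞 y‖ ≤ 2 * π * |x - y| := by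
  have h : 𝐞 x - 𝐞 y = 𝐞 y * (Complex.exp (Complex.I * ↑(2 * π * (x - y))) - 1) := by
    rw [mul_sub, mul_one, ← Complex.exp_add]; push_cast; ring_nf
  rw [h, norm_mul, norm_cexp_two_pi, one_mul]
  refine Real.norm_exp_I_mul_ofReal_sub_one_le.trans_eq ?_
  rw [Real.norm_eq_abs, abs_mul, abs_of_pos two_pi_pos]

lemma norm_inv_cexp_two_pi_sub_one_le {x : ℝ} (hx₀ : 0 < x) (hx₁ : x ≤ 1 / 2) :
    ‖(𝐞 x - 1)⁻¹‖ ≤ (4 * x)⁻¹ := by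
  rw [norm_inv]
  exact inv_anti₀ (by positivity) (four_mul_le_norm_cexp_two_pi_sub_one hx₀.le hx₁)

lemma norm_inv_cexp_two_pi_sub_one_sub_le {x y : ℝ} (hy : 0 < y) (hyx : y ≤ x) (hx : x ≤ 1 / 2) :
    ‖(𝐞 y - 1)⁻¹ - (𝐞 x - 1)⁻¹‖ ≤ π / 8 * (y⁻¹ - x⁻¹) := by
  have hx₀ : 0 < x := hy.trans_le hyx
  have hlx := four_mul_le_norm_cexp_two_pi_sub_one hx₀.le hx
  have hly := four_mul_le_norm_cexp_two_pi_sub_one hy.le (hyx.trans hx)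
  rw [inv_sub_inv (norm_pos_iff.mp (by linarith)) (norm_pos_iff.mp (by linarith)), norm_div,
    norm_mul, div_le_iff₀ (mul_pos (by linarith) (by linarith)), sub_sub_sub_cancel_right]
  calc ‖𝐞 x - 𝐞 y‖ ≤ 2 * π * (x - y) := by
        simpa [abs_of_nonneg (sub_nonneg.2 hyx)] using norm_cexp_two_pi_sub_cexp_two_pi_le x y
    _ = π / 8 * (y⁻¹ - x⁻¹) * ((4 * y) * (4 * x)) := by field_simp; ring
    _ ≤ π / 8 * (y⁻¹ - x⁻¹) * (‖𝐞 y - 1‖ * ‖𝐞 x - 1‖) := by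
        have : 0 ≤ y⁻¹ - x⁻¹ := sub_nonneg.2 (inv_anti₀ hy hyx)
        gcongr

lemma norm_sum_mul_sub_le (w E : ℕ → ℂ) (hE : ∀ s, ‖E s‖ ≤ 1) (N : ℕ) :
    ‖∑ s ∈ range (N + 1), w s * (E (s + 1) - E s)‖ ≤
      2 * (‖w N‖ + ∑ s ∈ range N, ‖w (s + 1) - w s‖) := by
  have hdiff : ∀ k, ‖E k - E 0‖ ≤ 2 := fun k =>
    (norm_sub_le _ _).trans (by linarith [hE k, hE 0])
  simp_rw [← smul_eq_mul (a := w _)]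
  rw [sum_range_by_parts]
  simp only [sum_range_sub, add_tsub_cancel_right]
  refine (norm_sub_le _ _).trans ?_
  rw [mul_add, mul_sum]
  gcongr
  · rw [norm_smul, mul_comm]; gcongr; exact hdiff _
  · refine (norm_sum_le _ _).trans (sum_le_sum fun s _ => ?_)
    rw [norm_smul, mul_comm]; gcongr; exact hdiff _

theorem kusmin_landau (φ : ℕ → ℝ) (N : ℕ) {δ : ℝ} (hδ : 0 < δ)
    (hlow : ∀ s < N, δ ≤ φ (s + 1) - φ s) (hhalf : ∀ s < N, φ (s + 1) - φ s ≤ 1 / 2)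
    (hanti : ∀ s, s + 1 < N → φ (s + 2) - φ (s + 1) ≤ φ (s + 1) - φ s) :
    ‖∑ s ∈ range N, 𝐞 (φ s)‖ ≤ 2 / δ := by
  cases N with
  | zero => simp only [range_zero, sum_empty, norm_zero]; positivity
  | succ N =>
  set ψ : ℕ → ℝ := fun s => φ (s + 1) - φ s
  have hψ₀ : ∀ s < N + 1, 0 < ψ s := fun s hs => hδ.trans_le (hlow s hs)
  -- `𝐞 ∘ φ` is, up to the factor `(𝐞 ψ - 1)⁻¹`, its own difference sequence
  have hsum : ∑ s ∈ range (N + 1), 𝐞 (φ s) =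
      ∑ s ∈ range (N + 1), (𝐞 (ψ s) - 1)⁻¹ * (𝐞 (φ (s + 1)) - 𝐞 (φ s)) := by
    refine sum_congr rfl fun s hs => ?_
    have hs := mem_range.mp hs
    have hne : 𝐞 (ψ s) - 1 ≠ 0 := norm_pos_iff.mp <| by
      linarith [hψ₀ s hs, four_mul_le_norm_cexp_two_pi_sub_one (hψ₀ s hs).le (hhalf s hs)]
    rw [show φ (s + 1) = φ s + ψ s by ring, cexp_two_pi_add, ← mul_sub_one, mul_comm (𝐞 (φ s)),
      ← mul_assoc, inv_mul_cancel₀ hne, one_mul]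
  have hlast : ‖(𝐞 (ψ N) - 1)⁻¹‖ ≤ (4 * δ)⁻¹ :=
    (norm_inv_cexp_two_pi_sub_one_le (hψ₀ N N.lt_succ_self) (hhalf N N.lt_succ_self)).trans
      (inv_anti₀ (by positivity) (by linarith [hlow N N.lt_succ_self]))
  have hvar : ∑ s ∈ range N, ‖(𝐞 (ψ (s + 1)) - 1)⁻¹ - (𝐞 (ψ s) - 1)⁻¹‖ ≤ π / 8 * δ⁻¹ :=
    calc ∑ s ∈ range N, ‖(𝐞 (ψ (s + 1)) - 1)⁻¹ - (𝐞 (ψ s) - 1)⁻¹‖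
        ≤ ∑ s ∈ range N, π / 8 * ((ψ (s + 1))⁻¹ - (ψ s)⁻¹) := by
          refine sum_le_sum fun s hs => ?_
          have hs := mem_range.mp hs
          exact norm_inv_cexp_two_pi_sub_one_sub_le (hψ₀ (s + 1) (by omega)) (hanti s (by omega))
            (hhalf s (by omega))
      _ = π / 8 * ((ψ N)⁻¹ - (ψ 0)⁻¹) := by
          rw [← mul_sum, sum_range_sub (fun s => (ψ s)⁻¹)]
      _ ≤ π / 8 * δ⁻¹ := by
          have := inv_anti₀ hδ (hlow N N.lt_succ_self)
          have := inv_pos.2 (hψ₀ 0 N.succ_pos)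
          gcongr
          linarith
  rw [hsum]
  refine (norm_sum_mul_sub_le _ _ (fun s => (norm_cexp_two_pi _).le) N).trans ?_
  calc 2 * (‖(𝐞 (ψ N) - 1)⁻¹‖ + _) ≤ 2 * ((4 * δ)⁻¹ + π / 8 * δ⁻¹) := by gcongr
    _ = (1 / 2 + π / 4) * δ⁻¹ := by ring
    _ ≤ 2 * δ⁻¹ := by gcongr; linarith [pi_lt_four]
    _ = 2 / δ := (div_eq_mul_inv _ _).symm

lemma norm_sum_cexp_two_pi_le_card (φ : ℕ → ℝ) (n : ℕ) : ‖∑ s ∈ range n, 𝐞 (φ s)‖ ≤ n :=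
  (norm_sum_le _ _).trans_eq (by simp only [norm_cexp_two_pi, sum_const, card_range, nsmul_one])

lemma norm_sum_cexp_two_pi_le_of_antitone (φ : ℕ → ℝ)
    (hanti : Antitone fun s => φ (s + 1) - φ s) (hpos : ∀ s, 0 < φ (s + 1) - φ s) {T : ℕ}
    (hT : ∀ s, T ≤ s → φ (s + 1) - φ s ≤ 1 / 2) (n : ℕ) :
    ‖∑ s ∈ range n, 𝐞 (φ s)‖ ≤ T + 2 / (φ (n + 1) - φ n) := by
  have hψn := hpos n
  rcases le_or_gt n T with hnT | hTn
  · calc ‖∑ s ∈ range n, 𝐞 (φ s)‖ ≤ n := norm_sum_cexp_two_pi_le_card φ n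
      _ ≤ T + 2 / (φ (n + 1) - φ n) := by
        have : (n : ℝ) ≤ T := by exact_mod_cast hnT
        linarith [div_pos two_pos hψn]
  obtain ⟨k, rfl⟩ := Nat.exists_eq_add_of_le hTn.le
  have htail : ‖∑ s ∈ range k, 𝐞 (φ (T + s))‖ ≤ 2 / (φ (T + k + 1) - φ (T + k)) :=
    kusmin_landau (fun s => φ (T + s)) k hψn
      (fun s hs => hanti (by omega : T + s ≤ T + k))
      (fun s _ => hT (T + s) (Nat.le_add_right T s))
      (fun s _ => hanti (Nat.le_succ (T + s)))
  rw [sum_range_add]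
  exact (norm_add_le _ _).trans (add_le_add (norm_sum_cexp_two_pi_le_card φ T) htail)

lemma exists_norm_sum_cexp_two_pi_le_rpow (φ : ℕ → ℝ)
    (hanti : Antitone fun s => φ (s + 1) - φ s) {c c' γ : ℝ} (hc : 0 < c) (hγ : 0 < γ)
    (hlow : ∀ n : ℕ, 1 ≤ n → c * (n : ℝ) ^ (-γ) ≤ φ (n + 1) - φ n)
    (hup : ∀ n : ℕ, 1 ≤ n → φ (n + 1) - φ n ≤ c' * (n : ℝ) ^ (-γ)) :
    ∃ C > 0, ∀ n : ℕ, 1 ≤ n → ‖∑ s ∈ range n, 𝐞 (φ s)‖ ≤ C * (n : ℝ) ^ γ := by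
  have hpos₁ : ∀ n : ℕ, 1 ≤ n → 0 < φ (n + 1) - φ n := fun n hn =>
    (mul_pos hc (by positivity)).trans_le (hlow n hn)
  have hpos : ∀ s, 0 < φ (s + 1) - φ s := fun s =>
    (hpos₁ (s + 1) (Nat.le_add_left 1 s)).trans_le (hanti (Nat.le_succ s))
  have hsmall : ∀ᶠ s in atTop, φ (s + 1) - φ s ≤ 1 / 2 := by
    have hdecay := ((tendsto_rpow_neg_atTop hγ).comp tendsto_natCast_atTop_atTop).const_mul c'
    rw [mul_zero] at hdecay
    filter_upwards [hdecay.eventually (ge_mem_nhds (by norm_num : (0 : ℝ) < 1 / 2)),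
      eventually_ge_atTop 1] with s hs hs₁
    exact (hup s hs₁).trans hs
  obtain ⟨T, hT⟩ := eventually_atTop.mp hsmall
  refine ⟨T + 2 / c, by positivity, fun n hn => ?_⟩
  have hpow : 1 ≤ (n : ℝ) ^ γ := Real.one_le_rpow (by exact_mod_cast hn) hγ.le
  calc ‖∑ s ∈ range n, 𝐞 (φ s)‖ ≤ T + 2 / (φ (n + 1) - φ n) :=
        norm_sum_cexp_two_pi_le_of_antitone φ hanti hpos hT n
    _ ≤ T + 2 / (c * (n : ℝ) ^ (-γ)) := by
        have := hlow n hn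
        gcongr
    _ = T + 2 / c * (n : ℝ) ^ γ := by
        rw [rpow_neg (Nat.cast_nonneg n)]
        field_simp
    _ ≤ (T + 2 / c) * (n : ℝ) ^ γ := by
        rw [add_mul]; gcongr; exact le_mul_of_one_le_right (Nat.cast_nonneg T) hpow

lemma ConcaveOn.antitoneOn_add_sub {f : ℝ → ℝ} (hf : ConcaveOn ℝ (Set.Ici 0) f) {h : ℝ}
    (hh : 0 ≤ h) : AntitoneOn (fun x => f (x + h) - f x) (Set.Ici 0) := by
  intro a ha b hb hab
  rcases hh.eq_or_lt with rfl | hh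
  · simp
  rcases hab.eq_or_lt with rfl | hab
  · rfl
  have hmem : ∀ {x}, x ∈ Set.Ici (0 : ℝ) → x + h ∈ Set.Ici 0 := fun hx =>
    Set.mem_Ici.2 (add_nonneg hx hh.le)
  -- the secant slopes of a concave function decrease in both endpoints
  have h₁ : slope f a (b + h) ≤ slope f a (a + h) :=
    hf.slope_anti ha ⟨hmem ha, (ne_of_gt (by linarith) : a + h ≠ a)⟩
      ⟨hmem hb, (ne_of_gt (by linarith) : b + h ≠ a)⟩ (by linarith)
  have h₂ : slope f (b + h) b ≤ slope f (b + h) a :=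
    hf.slope_anti (hmem hb) ⟨ha, (ne_of_lt (by linarith) : a ≠ b + h)⟩
      ⟨hb, (ne_of_lt (by linarith) : b ≠ b + h)⟩ hab.le
  rw [slope_comm f (b + h) a, slope_comm f (b + h) b] at h₂
  have h₃ := h₂.trans h₁
  simp only [slope_def_field, add_sub_cancel_left] at h₃
  exact (div_le_div_iff_of_pos_right hh).1 h₃

lemma ConcaveOn.sub_le_mul_of_hasDerivAt {S : Set ℝ} {f : ℝ → ℝ} {f' x y : ℝ}
    (hf : ConcaveOn ℝ S f) (hx : x ∈ S) (hy : y ∈ S) (hxy : x < y) (hf' : HasDerivAt f f' x) :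
    f y - f x ≤ f' * (y - x) := by
  have := hf.slope_le_of_hasDerivAt hx hy hxy hf'
  rwa [slope_def_field, div_le_iff₀ (sub_pos.2 hxy)] at this

lemma ConcaveOn.mul_le_sub_of_hasDerivAt {S : Set ℝ} {f : ℝ → ℝ} {f' x y : ℝ}
    (hf : ConcaveOn ℝ S f) (hx : x ∈ S) (hy : y ∈ S) (hxy : x < y) (hf' : HasDerivAt f f' y) :
    f' * (y - x) ≤ f y - f x := by
  have := hf.le_slope_of_hasDerivAt hx hy hxy hf'
  rwa [slope_def_field, le_div_iff₀ (sub_pos.2 hxy)] at this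

lemma hasDerivAt_rpow_add_sub_rpow {β : ℝ} (hβ : 1 ≤ β) (m x : ℝ) :
    HasDerivAt (fun t => (t + m) ^ β - t ^ β) (β * ((x + m) ^ (β - 1) - x ^ (β - 1))) x := by
  exact ((((hasDerivAt_id' x).add_const m).rpow_const (Or.inr hβ)).sub
    (hasDerivAt_rpow_const (Or.inr hβ))).congr_deriv (by ring)

lemma concaveOn_rpow_add_sub_rpow {β m : ℝ} (hβ₁ : 1 ≤ β) (hβ₂ : β ≤ 2) (hm : 0 ≤ m) :
    ConcaveOn ℝ (Set.Ici 0) fun t => (t + m) ^ β - t ^ β := by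
  have hderiv := hasDerivAt_rpow_add_sub_rpow hβ₁ m
  refine AntitoneOn.concaveOn_of_deriv (convex_Ici 0)
    (fun x _ => (hderiv x).continuousAt.continuousWithinAt)
    (fun x _ => (hderiv x).differentiableAt.differentiableWithinAt) ?_
  have hK := (concaveOn_rpow (p := β - 1) (by linarith) (by linarith)).antitoneOn_add_sub hm
  intro a ha b hb hab
  simp only [(hderiv _).deriv]
  exact mul_le_mul_of_nonneg_left (hK (interior_subset ha) (interior_subset hb) hab)
    (by linarith)

lemma rpow_add_sub_rpow_le {p m x : ℝ} (hp₀ : 0 ≤ p) (hp₁ : p ≤ 1) (hm : 0 < m) (hx : 0 < x) :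
    (x + m) ^ p - x ^ p ≤ p * x ^ (p - 1) * m := by
  simpa using (concaveOn_rpow hp₀ hp₁).sub_le_mul_of_hasDerivAt (y := x + m) hx.le
    (Set.mem_Ici.2 (by linarith)) (by linarith) (hasDerivAt_rpow_const (Or.inl hx.ne'))

lemma mul_le_rpow_add_sub_rpow {p m x : ℝ} (hp₀ : 0 ≤ p) (hp₁ : p ≤ 1) (hm : 0 < m)
    (hx : 0 ≤ x) : p * (x + m) ^ (p - 1) * m ≤ (x + m) ^ p - x ^ p := by
  simpa using (concaveOn_rpow hp₀ hp₁).mul_le_sub_of_hasDerivAt (y := x + m) hx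
    (Set.mem_Ici.2 (by linarith)) (by linarith) (hasDerivAt_rpow_const (Or.inl (by linarith)))

lemma rpow_add_sub_rpow_increment_mem_Icc {β m x : ℝ} (hβ₁ : 1 ≤ β) (hβ₂ : β ≤ 2)
    (hm : 0 ≤ m) (hx : 0 ≤ x) :
    ((x + 1 + m) ^ β - (x + 1) ^ β) - ((x + m) ^ β - x ^ β) ∈
      Set.Icc (β * ((x + 1 + m) ^ (β - 1) - (x + 1) ^ (β - 1)))
        (β * ((x + m) ^ (β - 1) - x ^ (β - 1))) := by
  have hH := concaveOn_rpow_add_sub_rpow hβ₁ hβ₂ hm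
  have hx₁ : x + 1 ∈ Set.Ici (0 : ℝ) := Set.mem_Ici.2 (by linarith)
  constructor
  · simpa using hH.mul_le_sub_of_hasDerivAt hx hx₁ (lt_add_one x)
      (hasDerivAt_rpow_add_sub_rpow hβ₁ m (x + 1))
  · simpa using hH.sub_le_mul_of_hasDerivAt hx hx₁ (lt_add_one x)
      (hasDerivAt_rpow_add_sub_rpow hβ₁ m x)

lemma exists_norm_sum_cexp_two_pi_rpow_add_sub_rpow_le {α β m : ℝ} (hα : 0 < α) (hβ₁ : 1 < β)
    (hβ₂ : β < 2) (hm : 0 < m) :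
    ∃ C > 0, ∀ n : ℕ, 1 ≤ n →
      ‖∑ s ∈ range n, 𝐞 (α * ((s : ℝ) + m) ^ β - α * (s : ℝ) ^ β)‖ ≤ C * (n : ℝ) ^ (2 - β) := by
  set φ : ℕ → ℝ := fun s => α * ((s : ℝ) + m) ^ β - α * (s : ℝ) ^ β
  set K : ℝ → ℝ := fun x => (x + m) ^ (β - 1) - x ^ (β - 1)
  have hβ' : β - 1 - 1 = β - 2 := by ring
  have hinc : ∀ s : ℕ,
      α * β * K (s + 1) ≤ φ (s + 1) - φ s ∧ φ (s + 1) - φ s ≤ α * β * K s := by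
    intro s
    obtain ⟨h₁, h₂⟩ := rpow_add_sub_rpow_increment_mem_Icc hβ₁.le hβ₂.le hm.le (Nat.cast_nonneg s)
    have : φ (s + 1) - φ s =
        α * (((s + 1 + m) ^ β - (s + 1) ^ β) - ((s + m) ^ β - (s : ℝ) ^ β)) := by
      simp only [φ]; push_cast; ring
    simp only [this, K, mul_assoc]
    exact ⟨mul_le_mul_of_nonneg_left h₁ hα.le, mul_le_mul_of_nonneg_left h₂ hα.le⟩
  have hKlow : ∀ x : ℝ, 0 ≤ x → (β - 1) * (x + m) ^ (β - 2) * m ≤ K x := fun x hx => by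
    have := mul_le_rpow_add_sub_rpow (p := β - 1) (by linarith) (by linarith) hm hx
    rwa [hβ'] at this
  have hKup : ∀ x : ℝ, 0 < x → K x ≤ (β - 1) * x ^ (β - 2) * m := fun x hx => by
    have := rpow_add_sub_rpow_le (p := β - 1) (by linarith) (by linarith) hm hx
    rwa [hβ'] at this
  refine exists_norm_sum_cexp_two_pi_le_rpow φ ?_
    (c := α * β * ((β - 1) * (2 + m) ^ (β - 2) * m)) (c' := α * β * (β - 1) * m)
    (by positivity) (by linarith) ?_ ?_
  · refine antitone_nat_of_succ_le fun s => ?_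
    have h := (hinc (s + 1)).2
    push_cast at h
    exact h.trans (hinc s).1
  · intro n hn
    calc α * β * ((β - 1) * (2 + m) ^ (β - 2) * m) * (n : ℝ) ^ (-(2 - β))
        = α * β * ((β - 1) * ((2 + m) * n) ^ (β - 2) * m) := by
          rw [mul_rpow (by positivity) (by positivity), neg_sub]; ring
      _ ≤ α * β * ((β - 1) * (n + 1 + m) ^ (β - 2) * m) := by
          have : 0 ≤ β - 1 := by linarith
          have : (1 : ℝ) ≤ n := by exact_mod_cast hn
          gcongr α * β * (_ * ?_ * _)
          exact rpow_le_rpow_of_nonpos (by positivity) (by nlinarith) (by linarith)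
      _ ≤ α * β * K (n + 1) := by gcongr; exact hKlow _ (by positivity)
      _ ≤ φ (n + 1) - φ n := (hinc n).1
  · intro n hn
    calc φ (n + 1) - φ n ≤ α * β * K n := (hinc n).2
      _ ≤ α * β * ((β - 1) * (n : ℝ) ^ (β - 2) * m) := by
          gcongr; exact hKup _ (by exact_mod_cast hn)
      _ = α * β * (β - 1) * m * (n : ℝ) ^ (-(2 - β)) := by rw [neg_sub]; ring

lemma tendsto_inv_mul_zero_of_norm_le_rpow {a : ℕ → ℂ} {C γ : ℝ} (hγ : γ < 1)
    (ha : ∀ n : ℕ, 1 ≤ n → ‖a n‖ ≤ C * (n : ℝ) ^ γ) :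
    Tendsto (fun n : ℕ => (n : ℂ)⁻¹ * a n) atTop (nhds 0) := by
  have hdecay : Tendsto (fun n : ℕ => C * (n : ℝ) ^ (γ - 1)) atTop (nhds 0) := by
    have := (tendsto_rpow_neg_atTop (by linarith : 0 < 1 - γ)).comp tendsto_natCast_atTop_atTop
    simpa [neg_sub] using this.const_mul C
  refine squeeze_zero_norm' ?_ hdecay
  filter_upwards [eventually_ge_atTop 1] with n hn
  have hn' : (0 : ℝ) < n := by exact_mod_cast hn
  rw [norm_mul, norm_inv, Complex.norm_natCast, rpow_sub_one hn'.ne', inv_mul_le_iff₀ hn']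
  calc ‖a n‖ ≤ C * (n : ℝ) ^ γ := ha n hn
    _ = n * (C * ((n : ℝ) ^ γ / n)) := by field_simp

lemma cexp_mul_I_mul_conj (x y : ℝ) :
    Complex.exp (x * Complex.I) * conj (Complex.exp (y * Complex.I)) =
      conj (Complex.exp ((y - x : ℝ) * Complex.I)) := by
  simp only [← Complex.exp_conj, map_mul, Complex.conj_ofReal, Complex.conj_I, ← Complex.exp_add]
  push_cast
  ring_nf

/-- Van der Corput estimate for `φ(t) = α(t+m)^β - αt^β`, `1 < β < 2`: the exponential
sums are `≲ n^{(3-β)/2} = o(n)`, hence `ξ(n) = e(αn^β)` is a Wiener sequence with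
`ρ(k) = 0` for `k ≥ 1` and `ρ(0) = 1`. -/
theorem van_der_corput_beta (α β : ℝ) (hα : 0 < α) (hβ : 1 < β) (hβ2 : β < 2) :
    (∀ m : ℕ, 1 ≤ m → ∃ C : ℝ, 0 < C ∧ ∀ n : ℕ, 1 ≤ n →
      ‖∑ s ∈ Finset.range n,
          Complex.exp ((2 * π * (α * ((s + m : ℕ) : ℝ) ^ β - α * (s : ℝ) ^ β) : ℝ) * Complex.I)‖
        ≤ C * (n : ℝ) ^ ((3 - β) / 2)) ∧
    (∀ k : ℕ, 1 ≤ k →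
      Tendsto (fun n : ℕ => (n : ℂ)⁻¹ * ∑ s ∈ Finset.range n,
          Complex.exp ((2 * π * α * (s : ℝ) ^ β : ℝ) * Complex.I) *
            conj (Complex.exp ((2 * π * α * ((s + k : ℕ) : ℝ) ^ β : ℝ) * Complex.I)))
        atTop (nhds 0)) ∧
    Tendsto (fun n : ℕ => (n : ℂ)⁻¹ * ∑ s ∈ Finset.range n,
        Complex.exp ((2 * π * α * (s : ℝ) ^ β : ℝ) * Complex.I) *
          conj (Complex.exp ((2 * π * α * (s : ℝ) ^ β : ℝ) * Complex.I)))
      atTop (nhds 1) := by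
  refine ⟨fun m hm => ?_, fun k hk => ?_, ?_⟩
  · obtain ⟨C, hC, hbound⟩ :=
      exists_norm_sum_cexp_two_pi_rpow_add_sub_rpow_le hα hβ hβ2 (m := m) (by exact_mod_cast hm)
    refine ⟨C, hC, fun n hn => ?_⟩
    simp only [Nat.cast_add]
    refine (hbound n hn).trans ?_
    gcongr
    · exact_mod_cast hn
    · linarith
  · obtain ⟨C, -, hC⟩ :=
      exists_norm_sum_cexp_two_pi_rpow_add_sub_rpow_le hα hβ hβ2 (m := k) (by exact_mod_cast hk)
    refine tendsto_inv_mul_zero_of_norm_le_rpow (C := C) (by linarith : 2 - β < 1) fun n hn => ?_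
    rw [← Complex.norm_conj, map_sum]
    convert hC n hn using 4 with s
    rw [cexp_mul_I_mul_conj, Complex.conj_conj]
    congr 3
    push_cast
    ring
  · refine tendsto_const_nhds.congr' ?_
    filter_upwards [eventually_ge_atTop 1] with n hn
    simp only [Complex.mul_conj', Complex.norm_exp_ofReal_mul_I, Complex.ofReal_one, one_pow,
      sum_const, card_range, nsmul_one]
    exact (inv_mul_cancel₀ (Nat.cast_ne_zero.2 (by omega))).symm
end
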